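/- Let D be a constant symmetric positive semidefinite n×n real matrix, a : ℝⁿ → ℝⁿ a smooth vector field, ρ ∈ ℝ, and L f(x) = Σ_{i,j=1}^n D_{ij} ∂²f/∂x_i∂x_j(x) − Σ_{i=1}^n a_i(x) ∂f/∂x_i(x). Then the curvature-dimension criterion CD(ρ,∞), namely Γ₂(f)(x) ≥ ρ Γ(f)(x) for all smooth f : ℝⁿ → ℝ and all x ∈ ℝⁿ, holds if and only if ½( Ja(x) D + (Ja(x) D)* ) ≥ ρ D for all x ∈ ℝⁿ, in the sense of quadratic forms on ℝⁿ, where Ja is the Jacobian matrix of a. -/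

import Mathlib

open Matrix

/-- Partial derivative `∂f/∂x_i` of `f : ℝⁿ → ℝ` at `x`. -/
noncomputable def pd {n : ℕ} (i : Fin n) (f : (Fin n → ℝ) → ℝ) (x : Fin n → ℝ) : ℝ :=
  fderiv ℝ f x (Pi.single i 1)

/-- The second-order differential operator
`L f(x) = Σ_{i,j} D_{ij}(x) ∂²f/∂x_i∂x_j(x) − Σ_i a_i(x) ∂f/∂x_i(x)`. -/
noncomputable def Lop {n : ℕ} (D : (Fin n → ℝ) → Matrix (Fin n) (Fin n) ℝ)
    (a : (Fin n → ℝ) → Fin n → ℝ) (f : (Fin n → ℝ) → ℝ) (x : Fin n → ℝ) : ℝ :=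
  (∑ i, ∑ j, D x i j * pd i (fun y => pd j f y) x) - ∑ i, a x i * pd i f x

/-- The carré du champ operator `Γ(f,g) = ½( L(fg) − f·Lg − g·Lf )`. -/
noncomputable def Gam {n : ℕ} (D : (Fin n → ℝ) → Matrix (Fin n) (Fin n) ℝ)
    (a : (Fin n → ℝ) → Fin n → ℝ) (f g : (Fin n → ℝ) → ℝ) (x : Fin n → ℝ) : ℝ :=
  (1 / 2) * (Lop D a (fun y => f y * g y) x - f x * Lop D a g x - g x * Lop D a f x)

/-- The `Γ₂` operator `Γ₂(f) = ½( LΓ(f) − 2Γ(f, Lf) )`, where `Γ(f) = Γ(f,f)`. -/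
noncomputable def Gam2 {n : ℕ} (D : (Fin n → ℝ) → Matrix (Fin n) (Fin n) ℝ)
    (a : (Fin n → ℝ) → Fin n → ℝ) (f : (Fin n → ℝ) → ℝ) (x : Fin n → ℝ) : ℝ :=
  (1 / 2) * (Lop D a (fun y => Gam D a f f y) x - 2 * Gam D a f (fun y => Lop D a f y) x)

/-- The Jacobian matrix `Ja(x) = ( ∂a_i/∂x_j(x) )_{ij}` of `a : ℝⁿ → ℝⁿ` at `x`. -/
noncomputable def Jac {n : ℕ} (a : (Fin n → ℝ) → Fin n → ℝ) (x : Fin n → ℝ) :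
    Matrix (Fin n) (Fin n) ℝ :=
  Matrix.of fun i j => pd j (fun y => a y i) x

/-! For constant `D` the carré du champ is `Γ(f,g) = ⟨∇f, D ∇g⟩`. Combined with
`L(uv) = u Lv + v Lu + 2Γ(u,v)` and the commutation rule `∂ₗ(Lf) = L(∂ₗf) − (∇f · Ja)ₗ`, this gives
the Bochner formula `Γ₂(f) = Σᵢⱼ Dᵢⱼ Γ(∂ᵢf, ∂ⱼf) + ⟨∇f, Ja D ∇f⟩`. Its first term is nonnegative
by the Schur product theorem, so the Jacobian condition implies `CD(ρ,∞)`. Conversely, the linear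
function `y ↦ ⟨v, y⟩` has vanishing Hessian, and `CD(ρ,∞)` tested on it is the Jacobian condition
at `v`. -/

open scoped ContDiff

section QuadraticForms

variable {ι R : Type*} [Fintype ι] [CommSemiring R]

theorem dotProduct_mulVec_eq_sum (v w : ι → R) (A : Matrix ι ι R) :
    v ⬝ᵥ A *ᵥ w = ∑ i, ∑ j, A i j * (v i * w j) := by
  simp only [dotProduct, mulVec, Finset.mul_sum]
  exact Finset.sum_congr rfl fun _ _ => Finset.sum_congr rfl fun _ _ => by ring

theorem Matrix.IsSymm.dotProduct_mulVec_comm {A : Matrix ι ι R} (hA : A.IsSymm) (v w : ι → R) :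
    v ⬝ᵥ A *ᵥ w = w ⬝ᵥ A *ᵥ v := by
  rw [← dotProduct_transpose_mulVec, hA.eq]

theorem Matrix.IsSymm.dotProduct_mulVec_vecMul {D : Matrix ι ι R} (hD : D.IsSymm)
    (J : Matrix ι ι R) (v : ι → R) : v ⬝ᵥ D *ᵥ (v ᵥ* J) = v ⬝ᵥ (J * D) *ᵥ v := by
  rw [hD.dotProduct_mulVec_comm, ← mulVec_mulVec, dotProduct_mulVec v J]

theorem dotProduct_half_smul_add_transpose_mulVec {K : Type*} [Field K] [CharZero K]
    (M : Matrix ι ι K) (v : ι → K) : v ⬝ᵥ ((1 / 2 : K) • (M + Mᵀ)) *ᵥ v = v ⬝ᵥ M *ᵥ v := by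
  rw [smul_mulVec, add_mulVec, dotProduct_smul, dotProduct_add, dotProduct_transpose_mulVec,
    smul_eq_mul]
  ring

theorem Matrix.PosSemidef.sum_sum_mul_dotProduct_mulVec_nonneg {m : Type*} [Fintype m]
    {A : Matrix ι ι ℝ} {B : Matrix m m ℝ} (hA : A.PosSemidef) (hB : B.PosSemidef)
    (w : ι → m → ℝ) : 0 ≤ ∑ i, ∑ j, A i j * (w i ⬝ᵥ B *ᵥ w j) := by
  have hM : (of w * B * (of w)ᵀ).PosSemidef := by
    simpa [conjTranspose_eq_transpose_of_trivial] using hB.mul_mul_conjTranspose_same (of w)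
  have hM_apply : ∀ i j, (of w * B * (of w)ᵀ) i j = w i ⬝ᵥ B *ᵥ w j := fun i j => by
    rw [dotProduct_mulVec, mul_apply, dotProduct]
    rfl
  simpa [dotProduct_mulVec_eq_sum, hM_apply] using (hA.hadamard hM).dotProduct_mulVec_nonneg 1

end QuadraticForms

noncomputable def grad {n : ℕ} (f : (Fin n → ℝ) → ℝ) (x : Fin n → ℝ) : Fin n → ℝ :=
  fun i => pd i f x

section PartialDeriv

variable {n : ℕ} {f g : (Fin n → ℝ) → ℝ}

theorem pd_add (hf : Differentiable ℝ f) (hg : Differentiable ℝ g) (i : Fin n) :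
    pd i (fun y => f y + g y) = fun y => pd i f y + pd i g y := by
  funext y; simp [pd, fderiv_fun_add (hf y) (hg y)]

theorem pd_sub (hf : Differentiable ℝ f) (hg : Differentiable ℝ g) (i : Fin n) :
    pd i (fun y => f y - g y) = fun y => pd i f y - pd i g y := by
  funext y; simp [pd, fderiv_fun_sub (hf y) (hg y)]

theorem pd_mul (hf : Differentiable ℝ f) (hg : Differentiable ℝ g) (i : Fin n) :
    pd i (fun y => f y * g y) = fun y => pd i f y * g y + f y * pd i g y := by
  funext y; simp [pd, fderiv_fun_mul (hf y) (hg y)]; ring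

theorem pd_const_mul (hf : Differentiable ℝ f) (c : ℝ) (i : Fin n) :
    pd i (fun y => c * f y) = fun y => c * pd i f y := by
  funext y; simp [pd, fderiv_const_mul (hf y)]

theorem pd_sum {ι : Type*} {s : Finset ι} {F : ι → (Fin n → ℝ) → ℝ}
    (hF : ∀ k ∈ s, Differentiable ℝ (F k)) (i : Fin n) :
    pd i (fun y => ∑ k ∈ s, F k y) = fun y => ∑ k ∈ s, pd i (F k) y := by
  funext y; simp [pd, fderiv_fun_sum fun k hk => hF k hk y]

theorem pd_const (c : ℝ) (i : Fin n) : pd i (fun _ => c) = fun _ => 0 := by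
  funext y; simp [pd]

theorem pd_apply (i j : Fin n) :
    pd i (fun y => y j) = fun _ => (Pi.single i 1 : Fin n → ℝ) j := by
  funext y; simp [pd, (hasFDerivAt_apply j y).fderiv]

theorem pd_dotProduct (v : Fin n → ℝ) (i : Fin n) : pd i (fun y => v ⬝ᵥ y) = fun _ => v i := by
  have : ∀ j, Differentiable ℝ fun y : Fin n → ℝ => y j := fun j => by fun_prop
  simp only [dotProduct]
  rw [pd_sum fun j _ => by fun_prop]
  simp [pd_const_mul (this _), pd_apply, Pi.single_apply]

theorem ContDiff.pd (hf : ContDiff ℝ ∞ f) (i : Fin n) : ContDiff ℝ ∞ (pd i f) :=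
  (hf.fderiv_right (m := ∞) le_rfl).clm_apply contDiff_const

theorem pd_comm (hf : ContDiff ℝ 2 f) (i j : Fin n) : pd i (pd j f) = pd j (pd i f) := by
  funext x
  have hdf : DifferentiableAt ℝ (fderiv ℝ f) x :=
    ((hf.fderiv_right (m := 1) le_rfl).differentiable one_ne_zero).differentiableAt
  have hpd : ∀ k l : Fin n,
      pd k (pd l f) x = fderiv ℝ (fderiv ℝ f) x (Pi.single k 1) (Pi.single l 1) := fun k l => by
    unfold pd; rw [fderiv_clm_apply hdf (differentiableAt_const _)]; simp
  rw [hpd, hpd, (hf.contDiffAt.isSymmSndFDerivAt (by simp)).eq]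

theorem pd_pd_pd_comm (hf : ContDiff ℝ ∞ f) (i j k : Fin n) :
    pd i (pd j (pd k f)) = pd j (pd k (pd i f)) := by
  rw [pd_comm ((hf.pd k).of_le (by norm_cast)), pd_comm (hf.of_le (by norm_cast)) i k]

end PartialDeriv

section CarreDuChamp

variable {n : ℕ} {f g : (Fin n → ℝ) → ℝ} (D : (Fin n → ℝ) → Matrix (Fin n) (Fin n) ℝ)
  (a : (Fin n → ℝ) → Fin n → ℝ)

theorem lop_sum {ι : Type*} {s : Finset ι} {F : ι → (Fin n → ℝ) → ℝ}
    (hF : ∀ k ∈ s, ContDiff ℝ ∞ (F k)) (x : Fin n → ℝ) :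
    Lop D a (fun y => ∑ k ∈ s, F k y) x = ∑ k ∈ s, Lop D a (F k) x := by
  have h1 : ∀ k ∈ s, Differentiable ℝ (F k) := fun k hk => (hF k hk).differentiable (by simp)
  have h2 : ∀ j, ∀ k ∈ s, Differentiable ℝ (pd j (F k)) :=
    fun j k hk => ((hF k hk).pd j).differentiable (by simp)
  simp only [Lop, pd_sum h1, pd_sum (h2 _), Finset.mul_sum, Finset.sum_sub_distrib]
  congr 1
  · calc _ = ∑ i, ∑ k ∈ s, ∑ j, D x i j * pd i (pd j (F k)) x :=
          Finset.sum_congr rfl fun _ _ => Finset.sum_comm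
      _ = _ := Finset.sum_comm
  · exact Finset.sum_comm

theorem lop_const_mul (hf : ContDiff ℝ ∞ f) (c : ℝ) (x : Fin n → ℝ) :
    Lop D a (fun y => c * f y) x = c * Lop D a f x := by
  have h1 : Differentiable ℝ f := hf.differentiable (by simp)
  have h2 : ∀ j, Differentiable ℝ (pd j f) := fun j => (hf.pd j).differentiable (by simp)
  simp only [Lop, pd_const_mul h1, pd_const_mul (h2 _), mul_left_comm _ c, ← Finset.mul_sum,
    mul_sub]

theorem lop_mul_eq (x : Fin n → ℝ) :
    Lop D a (fun y => f y * g y) x = f x * Lop D a g x + g x * Lop D a f x + 2 * Gam D a f g x := by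
  unfold Gam
  ring

theorem gam_const_const (c d : ℝ) (x : Fin n → ℝ) : Gam D a (fun _ => c) (fun _ => d) x = 0 := by
  simp [Gam, Lop, pd_const]

theorem gam_eq_grad_dotProduct {x : Fin n → ℝ} (hD : (D x).IsSymm) (hf : ContDiff ℝ ∞ f)
    (hg : ContDiff ℝ ∞ g) : Gam D a f g x = grad f x ⬝ᵥ D x *ᵥ grad g x := by
  have := fun i => hf.pd i
  have := fun i => hg.pd i
  have second : ∑ i, ∑ j, D x i j * pd i (fun y => pd j (fun y => f y * g y) y) x
      = f x * (∑ i, ∑ j, D x i j * pd i (pd j g) x) + g x * (∑ i, ∑ j, D x i j * pd i (pd j f) x)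
        + (grad g x ⬝ᵥ D x *ᵥ grad f x + grad f x ⬝ᵥ D x *ᵥ grad g x) := by
    simp (disch := fun_prop (disch := simp)) only [pd_mul, pd_add]
    simp only [dotProduct_mulVec_eq_sum, grad, Finset.mul_sum, ← Finset.sum_add_distrib]
    exact Finset.sum_congr rfl fun _ _ => Finset.sum_congr rfl fun _ _ => by ring
  have first : ∑ i, a x i * pd i (fun y => f y * g y) x
      = f x * (∑ i, a x i * pd i g x) + g x * (∑ i, a x i * pd i f x) := by
    simp (disch := fun_prop (disch := simp)) only [pd_mul]
    simp only [Finset.mul_sum, ← Finset.sum_add_distrib]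
    exact Finset.sum_congr rfl fun _ _ => by ring
  rw [Gam, Lop, second, first, hD.dotProduct_mulVec_comm (grad g x)]
  unfold Lop
  ring

end CarreDuChamp

section Bochner

variable {n : ℕ} {f : (Fin n → ℝ) → ℝ} {a : (Fin n → ℝ) → Fin n → ℝ}

theorem contDiff_lop (D : Matrix (Fin n) (Fin n) ℝ) (ha : ∀ i, ContDiff ℝ ∞ fun x => a x i)
    (hf : ContDiff ℝ ∞ f) : ContDiff ℝ ∞ (Lop (fun _ => D) a f) := by
  have := fun i => hf.pd i
  have := fun i j => (hf.pd i).pd j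
  unfold Lop
  fun_prop

theorem pd_lop (D : Matrix (Fin n) (Fin n) ℝ) (ha : ∀ i, ContDiff ℝ ∞ fun x => a x i)
    (hf : ContDiff ℝ ∞ f) (l : Fin n) (x : Fin n → ℝ) :
    pd l (Lop (fun _ => D) a f) x = Lop (fun _ => D) a (pd l f) x - (grad f x ᵥ* Jac a x) l := by
  have := fun i => hf.pd i
  have := fun i j => (hf.pd i).pd j
  unfold Lop
  simp (disch := fun_prop (disch := simp)) only [pd_sub, pd_sum, pd_const_mul, pd_mul]
  simp only [pd_pd_pd_comm hf l, pd_comm (hf.of_le (by norm_cast)) l, vecMul, dotProduct, grad,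
    Jac, of_apply, Finset.sum_add_distrib]
  simp only [mul_comm (pd _ f x)]
  ring

theorem gam2_eq_bochner {D : Matrix (Fin n) (Fin n) ℝ} (hD : D.IsSymm)
    (ha : ∀ i, ContDiff ℝ ∞ fun x => a x i) (hf : ContDiff ℝ ∞ f) (x : Fin n → ℝ) :
    Gam2 (fun _ => D) a f x
      = ∑ i, ∑ j, D i j * Gam (fun _ => D) a (pd i f) (pd j f) x
        + grad f x ⬝ᵥ (Jac a x * D) *ᵥ grad f x := by
  have := fun i => hf.pd i
  have hGam : (fun y => Gam (fun _ => D) a f f y)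
      = fun y => ∑ i, ∑ j, D i j * (pd i f y * pd j f y) :=
    funext fun y => by rw [gam_eq_grad_dotProduct _ _ hD hf hf, dotProduct_mulVec_eq_sum]; rfl
  have hLGam : Lop (fun _ => D) a (fun y => Gam (fun _ => D) a f f y) x
      = 2 * (grad f x ⬝ᵥ D *ᵥ fun l => Lop (fun _ => D) a (pd l f) x)
        + 2 * ∑ i, ∑ j, D i j * Gam (fun _ => D) a (pd i f) (pd j f) x := by
    nth_rw 1 [two_mul, hD.dotProduct_mulVec_comm (grad f x)]
    rw [hGam]
    simp (disch := (intros; fun_prop)) only [lop_sum, lop_const_mul, lop_mul_eq]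
    simp only [dotProduct_mulVec_eq_sum, grad, Finset.mul_sum, ← Finset.sum_add_distrib]
    exact Finset.sum_congr rfl fun _ _ => Finset.sum_congr rfl fun _ _ => by ring
  have hGamL : Gam (fun _ => D) a f (Lop (fun _ => D) a f) x
      = grad f x ⬝ᵥ D *ᵥ (fun l => Lop (fun _ => D) a (pd l f) x)
        - grad f x ⬝ᵥ D *ᵥ (grad f x ᵥ* Jac a x) := by
    rw [gam_eq_grad_dotProduct _ _ hD hf (contDiff_lop D ha hf), ← dotProduct_sub, ← mulVec_sub]
    congr 2
    funext l
    exact pd_lop D ha hf l x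
  rw [Gam2, hLGam, hGamL, hD.dotProduct_mulVec_vecMul]
  ring

end Bochner

/-- Let `D` be a constant symmetric positive semidefinite `n×n` matrix,
`a : ℝⁿ → ℝⁿ` a smooth vector field, `ρ ∈ ℝ`, and `L` the associated operator.  Then the
curvature-dimension criterion `CD(ρ,∞)`, namely `Γ₂(f)(x) ≥ ρ Γ(f)(x)` for all smooth `f`
and all `x`, holds if and only if `½( Ja(x)·D + (Ja(x)·D)* ) ≥ ρ D` for all `x`, in the
sense of quadratic forms on `ℝⁿ`. -/
theorem cd_rho_infty_iff_jacobian_condition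
    {n : ℕ} (D : Matrix (Fin n) (Fin n) ℝ) (hD : D.PosSemidef)
    (a : (Fin n → ℝ) → Fin n → ℝ)
    (ha : ∀ i, ContDiff ℝ (⊤ : ℕ∞) fun x => a x i)
    (ρ : ℝ) :
    (∀ f : (Fin n → ℝ) → ℝ, ContDiff ℝ (⊤ : ℕ∞) f → ∀ x,
        ρ * Gam (fun _ => D) a f f x ≤ Gam2 (fun _ => D) a f x) ↔
      ∀ (x : Fin n → ℝ) (v : Fin n → ℝ),
        ρ * (v ⬝ᵥ D.mulVec v) ≤
          v ⬝ᵥ ((1 / 2 : ℝ) • (Jac a x * D + (Jac a x * D)ᵀ)).mulVec v := by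
  have hDs : D.IsSymm := by simpa using hD.isHermitian
  simp only [dotProduct_half_smul_add_transpose_mulVec]
  constructor
  · intro hCD x v
    have hℓ : ContDiff ℝ ∞ fun y => v ⬝ᵥ y := by simp only [dotProduct]; fun_prop
    have hgrad : grad (fun y => v ⬝ᵥ y) x = v := funext fun i => congrFun (pd_dotProduct v i) x
    have h := hCD _ hℓ x
    rw [gam_eq_grad_dotProduct (fun _ => D) a hDs hℓ hℓ, gam2_eq_bochner hDs ha hℓ, hgrad] at h
    simpa [pd_dotProduct, gam_const_const] using h
  · intro hJ f hf x
    have hHess := hD.sum_sum_mul_dotProduct_mulVec_nonneg hD fun i => grad (pd i f) x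
    rw [gam_eq_grad_dotProduct (fun _ => D) a hDs hf hf, gam2_eq_bochner hDs ha hf x]
    simp only [gam_eq_grad_dotProduct (fun _ => D) a hDs (hf.pd _) (hf.pd _)]
    linarith [hJ x (grad f x)]
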